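/- Let (V, ‖·‖_V) and (Q, ‖·‖_Q) be ℝ^k and ℝ^n equipped with norms induced by inner products. Let ã : V × V → ℝ be a symmetric bilinear form and b : V × Q → ℝ a bilinear form, and let c_c, c_d, c₃ > 0 be constants such that: (i) |ã(u, v)| ≤ c_d ‖u‖_V ‖v‖_V for all u, v ∈ V; (ii) ã(v, v) ≥ c_c ‖v‖_V² for all v ∈ V; (iii) for every p ∈ Q there exists ṽ ∈ V with b(ṽ, p) = ‖p‖_Q² and ‖ṽ‖_V ≤ c₃⁻¹ ‖p‖_Q. Define a((u, p), (v, q)) := ã(u, v) + b(v, p) + b(u, q) on (V × Q) × (V × Q) and ‖(u, p)‖² := ‖u‖_V² + ‖p‖_Q². Then, with c_{s1} := (c_c/2)·min(1, c₃²/c_d²) and c_{s2} := (max(2, 1 + 2c_c²c₃²/c_d⁴))^{1/2}, for every (u, p) ∈ V × Q there exists (v, q) ∈ V × Q, nonzero when (u, p) ≠ 0, with a((u, p), (v, q)) ≥ (c_{s1}/c_{s2}) ‖(u, p)‖ ‖(v, q)‖. -/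

import Mathlib

/-!
Test with `(v, q) = (u + δ w, -p)`, where `w` realizes the inf-sup condition for `p` and
`δ = c_c c₃² / c_d²`. Then `a((u,p),(v,q)) = ã(u,u) + δ ã(u,w) + δ ‖p‖²`; coercivity, boundedness,
`‖w‖ ≤ ‖p‖ / c₃` and Young's inequality bound this below by
`(c_c/2) (‖u‖² + (c₃/c_d)² ‖p‖²) ≥ c_{s1} ‖(u,p)‖²`, while the triangle inequality gives
`‖(v,q)‖² ≤ c_{s2}² ‖(u,p)‖²`.
-/

open Matrix

/-- The norm on `k → ℝ` induced by a (positive definite) matrix `M`: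
`‖x‖_M = (xᵀ M x)^{1/2}`. -/
noncomputable def mnorm {k : Type*} [Fintype k] (M : Matrix k k ℝ) (x : k → ℝ) : ℝ :=
  Real.sqrt (x ⬝ᵥ M.mulVec x)

section mnorm

variable {ι : Type*} [Fintype ι] {M : Matrix ι ι ℝ}

lemma mnorm_nonneg (x : ι → ℝ) : 0 ≤ mnorm M x := Real.sqrt_nonneg _

@[simp] lemma mnorm_zero : mnorm M 0 = 0 := by simp [mnorm]

lemma mnorm_smul (c : ℝ) (x : ι → ℝ) : mnorm M (c • x) = |c| * mnorm M x := by
  rw [mnorm, mulVec_smul, dotProduct_smul, smul_dotProduct, smul_eq_mul, smul_eq_mul, ← mul_assoc,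
    ← sq, Real.sqrt_mul (sq_nonneg c), Real.sqrt_sq_eq_abs, mnorm]

@[simp] lemma mnorm_neg (x : ι → ℝ) : mnorm M (-x) = mnorm M x := by
  simpa using mnorm_smul (M := M) (-1) x

lemma Matrix.PosSemidef.mnorm_eq_norm (hM : M.PosSemidef) (x : ι → ℝ) :
    mnorm M x = @Norm.norm _ (M.toSeminormedAddCommGroup hM).toNorm x := by
  show _ = Real.sqrt (M *ᵥ x ⬝ᵥ x)
  rw [mnorm, dotProduct_comm]

lemma Matrix.PosSemidef.mnorm_add_le (hM : M.PosSemidef) (x y : ι → ℝ) :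
    mnorm M (x + y) ≤ mnorm M x + mnorm M y := by
  simpa only [hM.mnorm_eq_norm] using
    @norm_add_le _ (M.toSeminormedAddCommGroup hM).toSeminormedAddGroup x y

lemma Matrix.PosDef.mnorm_eq_zero (hM : M.PosDef) {x : ι → ℝ} : mnorm M x = 0 ↔ x = 0 := by
  refine ⟨fun h ↦ ?_, fun h ↦ h ▸ mnorm_zero⟩
  by_contra hx
  have hpos : 0 < x ⬝ᵥ M *ᵥ x := by simpa using hM.re_dotProduct_pos hx
  exact hpos.not_ge (Real.sqrt_eq_zero'.mp h)

end mnorm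

lemma mul_min_one_sq_mul_le {c r a b : ℝ} (hc : 0 ≤ c) :
    c / 2 * min 1 (r ^ 2) * (a ^ 2 + b ^ 2) ≤ c * a ^ 2 - c * r * a * b + c * r ^ 2 * b ^ 2 := by
  have hm₁ : min 1 (r ^ 2) ≤ 1 := min_le_left _ _
  have hm₂ : min 1 (r ^ 2) ≤ r ^ 2 := min_le_right _ _
  -- Young: `c r a b ≤ c/2 a² + c/2 r² b²`, the defect being `c/2 (a - r b)²`.
  nlinarith [mul_nonneg hc (sq_nonneg (a - r * b)),
    mul_nonneg (mul_nonneg hc (sub_nonneg.2 hm₁)) (sq_nonneg a),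
    mul_nonneg (mul_nonneg hc (sub_nonneg.2 hm₂)) (sq_nonneg b)]

lemma add_sq_add_sq_le_max_mul {a b s K : ℝ} (hs : 2 * s ^ 2 ≤ K * b ^ 2) :
    (a + s) ^ 2 + b ^ 2 ≤ max 2 (1 + K) * (a ^ 2 + b ^ 2) := by
  have h₂ : 2 * a ^ 2 ≤ max 2 (1 + K) * a ^ 2 :=
    mul_le_mul_of_nonneg_right (le_max_left _ _) (sq_nonneg a)
  have h₃ : (1 + K) * b ^ 2 ≤ max 2 (1 + K) * b ^ 2 :=
    mul_le_mul_of_nonneg_right (le_max_right _ _) (sq_nonneg b)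
  nlinarith [sq_nonneg (a - s)]

lemma div_sqrt_mul_sqrt_mul_sqrt_le {c X S T y : ℝ} (hc : 0 ≤ c) (hX : 0 < X) (hS : 0 ≤ S)
    (hlow : c * S ≤ y) (hT : T ≤ X * S) :
    c / √X * √S * √T ≤ y := calc
  c / √X * √S * √T ≤ c / √X * √S * (√X * √S) := by
    gcongr
    rw [← Real.sqrt_mul hX.le]
    exact Real.sqrt_le_sqrt hT
  _ = c * S := by
    field_simp
    rw [Real.sq_sqrt hS]
  _ ≤ y := hlow

section saddle

variable {ι κ : Type*} [Fintype ι] [Fintype κ] {MV : Matrix ι ι ℝ} {MQ : Matrix κ κ ℝ}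
  {At : Matrix ι ι ℝ} {Bm : Matrix ι κ ℝ} {cc cd c₃ : ℝ}

lemma saddle_form_add_smul_neg (u w : ι → ℝ) (p : κ → ℝ) (δ : ℝ) :
    u ⬝ᵥ At *ᵥ (u + δ • w) + (u + δ • w) ⬝ᵥ Bm *ᵥ p + u ⬝ᵥ Bm *ᵥ (-p) =
      u ⬝ᵥ At *ᵥ u + δ * (u ⬝ᵥ At *ᵥ w) + δ * (w ⬝ᵥ Bm *ᵥ p) := by
  simp only [mulVec_add, mulVec_smul, mulVec_neg, dotProduct_add, add_dotProduct,
    dotProduct_smul, smul_dotProduct, dotProduct_neg, smul_eq_mul]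
  ring

lemma le_saddle_form_add_smul_neg (hcc : 0 ≤ cc) (hcd : 0 ≤ cd)
    (hbound : ∀ u v : ι → ℝ, |u ⬝ᵥ At *ᵥ v| ≤ cd * mnorm MV u * mnorm MV v)
    (hcoerc : ∀ v : ι → ℝ, cc * mnorm MV v ^ 2 ≤ v ⬝ᵥ At *ᵥ v)
    {u w : ι → ℝ} {p : κ → ℝ} (hwp : w ⬝ᵥ Bm *ᵥ p = mnorm MQ p ^ 2)
    (hw : mnorm MV w ≤ c₃⁻¹ * mnorm MQ p) :
    cc / 2 * min 1 (c₃ ^ 2 / cd ^ 2) * (mnorm MV u ^ 2 + mnorm MQ p ^ 2) ≤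
      u ⬝ᵥ At *ᵥ (u + (cc * c₃ ^ 2 / cd ^ 2) • w) + (u + (cc * c₃ ^ 2 / cd ^ 2) • w) ⬝ᵥ Bm *ᵥ p
        + u ⬝ᵥ Bm *ᵥ (-p) := by
  set a := mnorm MV u
  set b := mnorm MQ p
  have hcross : -(cc * (c₃ / cd) * a * b) ≤ cc * c₃ ^ 2 / cd ^ 2 * (u ⬝ᵥ At *ᵥ w) := calc
    -(cc * (c₃ / cd) * a * b) = -(cc * c₃ ^ 2 / cd ^ 2 * (cd * a * (c₃⁻¹ * b))) := by
      field_simp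
    _ ≤ -(cc * c₃ ^ 2 / cd ^ 2 * (cd * a * mnorm MV w)) := by
      gcongr
      exact mul_nonneg hcd (mnorm_nonneg u)
    _ ≤ cc * c₃ ^ 2 / cd ^ 2 * (u ⬝ᵥ At *ᵥ w) := by
      rw [← mul_neg]
      gcongr
      exact neg_le_of_abs_le (hbound u w)
  have hyoung := mul_min_one_sq_mul_le (r := c₃ / cd) (a := a) (b := b) hcc
  rw [div_pow] at hyoung
  have hcoerc_u : cc * a ^ 2 ≤ u ⬝ᵥ At *ᵥ u := hcoerc u
  rw [saddle_form_add_smul_neg, hwp]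
  linear_combination hcoerc_u + hcross + hyoung

lemma mnorm_add_smul_sq_add_sq_le (hMV : MV.PosSemidef) (hcc : 0 ≤ cc)
    {u w : ι → ℝ} {p : κ → ℝ} (hw : mnorm MV w ≤ c₃⁻¹ * mnorm MQ p) :
    mnorm MV (u + (cc * c₃ ^ 2 / cd ^ 2) • w) ^ 2 + mnorm MQ p ^ 2 ≤
      max 2 (1 + 2 * cc ^ 2 * c₃ ^ 2 / cd ^ 4) * (mnorm MV u ^ 2 + mnorm MQ p ^ 2) := by
  set δ := cc * c₃ ^ 2 / cd ^ 2
  have hδ : 0 ≤ δ := by positivity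
  have htri : mnorm MV (u + δ • w) ≤ mnorm MV u + δ * mnorm MV w := by
    simpa [mnorm_smul, abs_of_nonneg hδ] using hMV.mnorm_add_le u (δ • w)
  have hsq : 2 * (δ * mnorm MV w) ^ 2 ≤ 2 * cc ^ 2 * c₃ ^ 2 / cd ^ 4 * mnorm MQ p ^ 2 := calc
    2 * (δ * mnorm MV w) ^ 2 ≤ 2 * (δ * (c₃⁻¹ * mnorm MQ p)) ^ 2 := by
      gcongr
      exact mul_nonneg hδ (mnorm_nonneg w)
    _ = 2 * cc ^ 2 * c₃ ^ 2 / cd ^ 4 * mnorm MQ p ^ 2 := by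
      simp only [δ]
      field_simp
  calc mnorm MV (u + δ • w) ^ 2 + mnorm MQ p ^ 2
      ≤ (mnorm MV u + δ * mnorm MV w) ^ 2 + mnorm MQ p ^ 2 := by
        gcongr
        exact mnorm_nonneg _
    _ ≤ _ := add_sq_add_sq_le_max_mul hsq

lemma add_smul_neg_ne_zero (hMV : MV.PosDef) {δ : ℝ} {u w : ι → ℝ} {p : κ → ℝ}
    (hw : mnorm MV w ≤ c₃⁻¹ * mnorm MQ p) (hup : (u, p) ≠ 0) : (u + δ • w, -p) ≠ 0 := by
  contrapose! hup
  obtain ⟨hv, hp⟩ := Prod.mk_eq_zero.mp hup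
  have hp : p = 0 := neg_eq_zero.mp hp
  have hw : w = 0 := hMV.mnorm_eq_zero.mp <| le_antisymm (by simpa [hp] using hw) (mnorm_nonneg w)
  simp_all

end saddle

theorem saddle_point_inf_sup_general
    (k n : ℕ)
    (MV : Matrix (Fin k) (Fin k) ℝ) (hMV : MV.PosDef)
    (MQ : Matrix (Fin n) (Fin n) ℝ)
    (At : Matrix (Fin k) (Fin k) ℝ)
    (Bm : Matrix (Fin k) (Fin n) ℝ)
    (cc cd c₃ : ℝ) (hcc : 0 < cc) (hcd : 0 < cd)
    -- (i) boundedness of ã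
    (hbound : ∀ u v : Fin k → ℝ, |u ⬝ᵥ At.mulVec v| ≤ cd * mnorm MV u * mnorm MV v)
    -- (ii) coercivity of ã
    (hcoerc : ∀ v : Fin k → ℝ, cc * (mnorm MV v) ^ 2 ≤ v ⬝ᵥ At.mulVec v)
    -- (iii) inf-sup condition for b
    (hinfsup : ∀ p : Fin n → ℝ, ∃ vt : Fin k → ℝ,
      vt ⬝ᵥ Bm.mulVec p = (mnorm MQ p) ^ 2 ∧ mnorm MV vt ≤ c₃⁻¹ * mnorm MQ p) :
    ∀ (u : Fin k → ℝ) (p : Fin n → ℝ), ∃ (v : Fin k → ℝ) (q : Fin n → ℝ),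
      ((u, p) ≠ 0 → (v, q) ≠ 0) ∧
      ((cc / 2) * min 1 (c₃ ^ 2 / cd ^ 2)) /
          Real.sqrt (max 2 (1 + 2 * cc ^ 2 * c₃ ^ 2 / cd ^ 4)) *
          Real.sqrt ((mnorm MV u) ^ 2 + (mnorm MQ p) ^ 2) *
          Real.sqrt ((mnorm MV v) ^ 2 + (mnorm MQ q) ^ 2) ≤
        u ⬝ᵥ At.mulVec v + v ⬝ᵥ Bm.mulVec p + u ⬝ᵥ Bm.mulVec q := by
  intro u p
  obtain ⟨w, hwp, hw⟩ := hinfsup p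
  refine ⟨u + (cc * c₃ ^ 2 / cd ^ 2) • w, -p, add_smul_neg_ne_zero hMV hw, ?_⟩
  refine div_sqrt_mul_sqrt_mul_sqrt_le (by positivity) (by positivity) (by positivity)
    (le_saddle_form_add_smul_neg hcc.le hcd.le hbound hcoerc hwp hw) ?_
  rw [mnorm_neg]
  exact mnorm_add_smul_sq_add_sq_le hMV.posSemidef hcc.le hw

/-- Abstract core of Lemma 5.2 (uniform inf-sup stability of the saddle-point form):
given a bounded coercive symmetric form `ã` on `V = ℝᵏ` and a bilinear form `b` on
`V × Q` satisfying the inf-sup condition, the saddle-point form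
`a((u,p),(v,q)) = ã(u,v) + b(v,p) + b(u,q)` satisfies a uniform inf-sup condition on
`V × Q` with constant `c_{s1}/c_{s2}`.  Here `V` and `Q` carry the inner-product norms
induced by the positive definite matrices `MV` and `MQ`, the symmetric bilinear form
`ã` is represented by the symmetric matrix `At`, and `b` by the matrix `Bm`. -/
theorem saddle_point_inf_sup
    (k n : ℕ)
    (MV : Matrix (Fin k) (Fin k) ℝ) (hMV : MV.PosDef)
    (MQ : Matrix (Fin n) (Fin n) ℝ) (hMQ : MQ.PosDef)
    (At : Matrix (Fin k) (Fin k) ℝ) (hAt : At.IsSymm)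
    (Bm : Matrix (Fin k) (Fin n) ℝ)
    (cc cd c₃ : ℝ) (hcc : 0 < cc) (hcd : 0 < cd) (hc₃ : 0 < c₃)
    -- (i) boundedness of ã
    (hbound : ∀ u v : Fin k → ℝ, |u ⬝ᵥ At.mulVec v| ≤ cd * mnorm MV u * mnorm MV v)
    -- (ii) coercivity of ã
    (hcoerc : ∀ v : Fin k → ℝ, cc * (mnorm MV v) ^ 2 ≤ v ⬝ᵥ At.mulVec v)
    -- (iii) inf-sup condition for b
    (hinfsup : ∀ p : Fin n → ℝ, ∃ vt : Fin k → ℝ,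
      vt ⬝ᵥ Bm.mulVec p = (mnorm MQ p) ^ 2 ∧ mnorm MV vt ≤ c₃⁻¹ * mnorm MQ p) :
    ∀ (u : Fin k → ℝ) (p : Fin n → ℝ), ∃ (v : Fin k → ℝ) (q : Fin n → ℝ),
      ((u, p) ≠ 0 → (v, q) ≠ 0) ∧
      ((cc / 2) * min 1 (c₃ ^ 2 / cd ^ 2)) /
          Real.sqrt (max 2 (1 + 2 * cc ^ 2 * c₃ ^ 2 / cd ^ 4)) *
          Real.sqrt ((mnorm MV u) ^ 2 + (mnorm MQ p) ^ 2) *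
          Real.sqrt ((mnorm MV v) ^ 2 + (mnorm MQ q) ^ 2) ≤
        u ⬝ᵥ At.mulVec v + v ⬝ᵥ Bm.mulVec p + u ⬝ᵥ Bm.mulVec q :=
  saddle_point_inf_sup_general k n MV hMV MQ At Bm cc cd c₃ hcc hcd hbound hcoerc hinfsup
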